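/- arXiv:2512.11302 — 2 statements merged into one kernel-verified Lean document; each statement's English description precedes it below -/
import Mathlib

section
/- Let G be a connected reductive group over an algebraically closed field with Borel subgroup B and opposite Borel B⁻. If g ∈ G satisfies g·(B⁻B) = B⁻B (as subsets of G), then g ∈ B⁻. -/
open Matrix

section Aux

variable {k : Type*} [Field k] {n : ℕ}

private lemma mem_map_castLE {i : Fin n} (d : Fin n) (hd : d.1 ≤ i.1) :
    d ∈ (Finset.univ : Finset (Fin (i.1 + 1))).map
      ⟨Fin.castLE i.2, Fin.castLE_injective _⟩ := by
  simp only [Finset.mem_map, Finset.mem_univ, true_and, Function.Embedding.coeFn_mk]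
  exact ⟨⟨d.1, Nat.lt_succ_of_le hd⟩, by ext; rfl⟩

private lemma submatrix_mul_left (L X : Matrix (Fin n) (Fin n) k)
    (hL : Lᵀ.BlockTriangular id) (i : Fin n) :
    (L * X).submatrix (Fin.castLE i.2) (Fin.castLE i.2) =
      (L.submatrix (Fin.castLE i.2) (Fin.castLE i.2)) *
        (X.submatrix (Fin.castLE i.2) (Fin.castLE i.2)) := by
  ext a c
  simp only [submatrix_apply, mul_apply]
  rw [← Finset.sum_subset (Finset.subset_univ ((Finset.univ : Finset (Fin (i.1 + 1))).map
      ⟨Fin.castLE i.2, Fin.castLE_injective _⟩)), Finset.sum_map]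
  · rfl
  · intro d _ hd
    have hdi : i.1 < d.1 := by
      by_contra h
      exact hd (mem_map_castLE d (le_of_not_gt h))
    have hlt : (Fin.castLE i.2 a : Fin n) < d := by
      rw [Fin.lt_def]
      exact lt_of_le_of_lt (Nat.lt_succ_iff.mp a.2) hdi
    have : L (Fin.castLE i.2 a) d = 0 := hL hlt
    rw [this, zero_mul]

private lemma submatrix_mul_right (X U : Matrix (Fin n) (Fin n) k)
    (hU : U.BlockTriangular id) (i : Fin n) :
    (X * U).submatrix (Fin.castLE i.2) (Fin.castLE i.2) =
      (X.submatrix (Fin.castLE i.2) (Fin.castLE i.2)) *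
        (U.submatrix (Fin.castLE i.2) (Fin.castLE i.2)) := by
  ext a c
  simp only [submatrix_apply, mul_apply]
  rw [← Finset.sum_subset (Finset.subset_univ ((Finset.univ : Finset (Fin (i.1 + 1))).map
      ⟨Fin.castLE i.2, Fin.castLE_injective _⟩)), Finset.sum_map]
  · rfl
  · intro d _ hd
    have hdi : i.1 < d.1 := by
      by_contra h
      exact hd (mem_map_castLE d (le_of_not_gt h))
    have hlt : (Fin.castLE i.2 c : Fin n) < d := by
      rw [Fin.lt_def]
      exact lt_of_le_of_lt (Nat.lt_succ_iff.mp c.2) hdi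
    have : U d (Fin.castLE i.2 c) = 0 := hU hlt
    rw [this, mul_zero]

private lemma submatrix_blockTriangular {U : Matrix (Fin n) (Fin n) k}
    (hU : U.BlockTriangular id) (i : Fin n) :
    (U.submatrix (Fin.castLE i.2) (Fin.castLE i.2)).BlockTriangular id := by
  intro p q h
  exact hU (show (Fin.castLE i.2 q : Fin n) < Fin.castLE i.2 p by
    rw [Fin.lt_def]; exact h)

private lemma det_submatrix_ne_zero_of_upper {u : (Matrix (Fin n) (Fin n) k)ˣ}
    (hu : (u : Matrix (Fin n) (Fin n) k).BlockTriangular id) (i : Fin n) :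
    ((u : Matrix (Fin n) (Fin n) k).submatrix (Fin.castLE i.2) (Fin.castLE i.2)).det ≠ 0 := by
  have hdet : (u : Matrix (Fin n) (Fin n) k).det ≠ 0 := by
    have := (Matrix.isUnit_iff_isUnit_det _).mp u.isUnit
    exact this.ne_zero
  rw [Matrix.det_of_upperTriangular hu] at hdet
  have hdiag : ∀ d : Fin n, (u : Matrix (Fin n) (Fin n) k) d d ≠ 0 := by
    intro d
    exact fun h => hdet (Finset.prod_eq_zero (Finset.mem_univ d) h)
  rw [Matrix.det_of_upperTriangular (submatrix_blockTriangular hu i)]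
  exact Finset.prod_ne_zero_iff.mpr fun p _ => hdiag _

private lemma det_submatrix_ne_zero_of_lower {u : (Matrix (Fin n) (Fin n) k)ˣ}
    (hu : ((u : Matrix (Fin n) (Fin n) k))ᵀ.BlockTriangular id) (i : Fin n) :
    ((u : Matrix (Fin n) (Fin n) k).submatrix (Fin.castLE i.2) (Fin.castLE i.2)).det ≠ 0 := by
  have hdet : (u : Matrix (Fin n) (Fin n) k).det ≠ 0 := by
    have := (Matrix.isUnit_iff_isUnit_det _).mp u.isUnit
    exact this.ne_zero
  rw [← Matrix.det_transpose, Matrix.det_of_upperTriangular hu] at hdet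
  have hdiag : ∀ d : Fin n, (u : Matrix (Fin n) (Fin n) k) d d ≠ 0 := by
    intro d
    exact fun h => hdet (Finset.prod_eq_zero (Finset.mem_univ d) (by simpa using h))
  rw [← Matrix.det_transpose, Matrix.transpose_submatrix,
    Matrix.det_of_upperTriangular (submatrix_blockTriangular hu i)]
  exact Finset.prod_ne_zero_iff.mpr fun p _ => hdiag _

end Aux

/-- For the connected reductive group `G = GLₙ` over an algebraically closed field of
characteristic `0`, with Borel subgroup `B` (invertible upper triangular matrices) and
opposite Borel `B⁻` (invertible lower triangular matrices): if `g ∈ G` satisfies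
`g·(B⁻B) = B⁻B` (as subsets of `G`), then `g ∈ Bm`. -/
theorem mem_opposite_borel_of_stabilizes_big_cell
    (k : Type*) [Field k] [IsAlgClosed k] [CharZero k] (n : ℕ)
    (B Bm S : Set (Matrix (Fin n) (Fin n) k)ˣ)
    (hB : B = {g : (Matrix (Fin n) (Fin n) k)ˣ | ((g : Matrix (Fin n) (Fin n) k)).BlockTriangular id})
    (hBm : Bm = {g : (Matrix (Fin n) (Fin n) k)ˣ | (((g : Matrix (Fin n) (Fin n) k))ᵀ).BlockTriangular id})
    (hS : S = {x | ∃ bm ∈ Bm, ∃ b ∈ B, x = bm * b})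
    (g : (Matrix (Fin n) (Fin n) k)ˣ)
    (hg : (fun x => g * x) '' S = S) :
    g ∈ Bm := by
  subst hB hBm hS
  -- the leading principal minors of any element of S are nonzero
  have hminor : ∀ x ∈ {x : (Matrix (Fin n) (Fin n) k)ˣ | ∃ bm ∈
      {g : (Matrix (Fin n) (Fin n) k)ˣ | (((g : Matrix (Fin n) (Fin n) k))ᵀ).BlockTriangular id},
      ∃ b ∈ {g : (Matrix (Fin n) (Fin n) k)ˣ | ((g : Matrix (Fin n) (Fin n) k)).BlockTriangular id},
      x = bm * b}, ∀ i : Fin n,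
      ((x : Matrix (Fin n) (Fin n) k).submatrix (Fin.castLE i.2) (Fin.castLE i.2)).det ≠ 0 := by
    rintro x ⟨bm, hbm, b, hb, rfl⟩ i
    have : ((bm * b : (Matrix (Fin n) (Fin n) k)ˣ) :
        Matrix (Fin n) (Fin n) k) = (bm : Matrix (Fin n) (Fin n) k) * b := rfl
    rw [this, submatrix_mul_left _ _ hbm i, Matrix.det_mul]
    exact mul_ne_zero (det_submatrix_ne_zero_of_lower hbm i)
      (det_submatrix_ne_zero_of_upper hb i)
  have h1S : (1 : (Matrix (Fin n) (Fin n) k)ˣ) ∈ {x : (Matrix (Fin n) (Fin n) k)ˣ | ∃ bm ∈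
      {g : (Matrix (Fin n) (Fin n) k)ˣ | (((g : Matrix (Fin n) (Fin n) k))ᵀ).BlockTriangular id},
      ∃ b ∈ {g : (Matrix (Fin n) (Fin n) k)ˣ | ((g : Matrix (Fin n) (Fin n) k)).BlockTriangular id},
      x = bm * b} :=
    ⟨1, by rw [Set.mem_setOf_eq, Units.val_one, Matrix.transpose_one];
            exact Matrix.blockTriangular_one,
     1, by rw [Set.mem_setOf_eq, Units.val_one]; exact Matrix.blockTriangular_one,
     (one_mul 1).symm⟩
  -- g ∈ S
  have hgS := hg ▸ Set.mem_image_of_mem _ h1S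
  rw [mul_one] at hgS
  obtain ⟨bm, hbm, b, hb, hgbb⟩ := hgS
  -- the strictly upper triangular part of b vanishes
  have hkey : ∀ p q : Fin n, p < q → (b : Matrix (Fin n) (Fin n) k) p q = 0 := by
    intro i j hij
    by_contra hne
    set c : k := -((b : Matrix (Fin n) (Fin n) k) i i) / (b : Matrix (Fin n) (Fin n) k) i j
      with hc
    set x0 : Matrix (Fin n) (Fin n) k := 1 + single j i c with hx0
    have hx0lower : x0ᵀ.BlockTriangular id := by
      intro p q hpq
      simp only [hx0, Matrix.transpose_apply, Matrix.add_apply, Matrix.one_apply,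
        Matrix.single]
      have h1 : q ≠ p := ne_of_lt hpq
      have h2 : ¬(j = q ∧ i = p) := by
        rintro ⟨rfl, rfl⟩
        exact absurd (lt_trans hpq hij) (lt_irrefl _)
      simp [h1, if_neg h2]
    have hx0det : x0.det = 1 := by
      rw [← Matrix.det_transpose, Matrix.det_of_upperTriangular hx0lower]
      have hd : ∀ d : Fin n, x0 d d = 1 := by
        intro d
        have hjd : ¬(j = d ∧ i = d) := by
          rintro ⟨rfl, rfl⟩
          exact absurd hij (lt_irrefl _)
        simp [hx0, Matrix.single, Matrix.of_apply, hjd]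
      simp [Matrix.transpose_apply, hd]
    have hx0unit : IsUnit x0 := (Matrix.isUnit_iff_isUnit_det _).mpr (by simp [hx0det])
    obtain ⟨u, hu⟩ := hx0unit
    have huS : u ∈ {x : (Matrix (Fin n) (Fin n) k)ˣ | ∃ bm ∈
        {g : (Matrix (Fin n) (Fin n) k)ˣ | (((g : Matrix (Fin n) (Fin n) k))ᵀ).BlockTriangular id},
        ∃ b ∈ {g : (Matrix (Fin n) (Fin n) k)ˣ | ((g : Matrix (Fin n) (Fin n) k)).BlockTriangular id},
        x = bm * b} := ⟨u, by rw [Set.mem_setOf_eq, hu]; exact hx0lower, 1,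
      Matrix.blockTriangular_one, (mul_one u).symm⟩
    have hguS := hg ▸ Set.mem_image_of_mem (fun x => g * x) huS
    have hminor_gu := hminor _ hguS i
    -- compute the i-th leading principal minor of g * u = bm * (b * x0)
    have hcoe : ((g * u : (Matrix (Fin n) (Fin n) k)ˣ) : Matrix (Fin n) (Fin n) k)
        = (bm : Matrix (Fin n) (Fin n) k) * ((b : Matrix (Fin n) (Fin n) k) * x0) := by
      rw [Units.val_mul, hu, hgbb, Units.val_mul, mul_assoc]
    rw [hcoe, submatrix_mul_left _ _ hbm i, Matrix.det_mul] at hminor_gu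
    apply hminor_gu
    apply mul_eq_zero_of_right
    -- the submatrix of b * x0 is upper triangular with a zero on the diagonal
    set N := ((b : Matrix (Fin n) (Fin n) k) * x0).submatrix (Fin.castLE i.2) (Fin.castLE i.2)
      with hN
    have hbx0 : (b : Matrix (Fin n) (Fin n) k) * x0
        = (b : Matrix (Fin n) (Fin n) k) + (b : Matrix (Fin n) (Fin n) k) * single j i c := by
      rw [hx0, mul_add, mul_one]
    have hNentry : ∀ p q : Fin (i.1 + 1), N p q
        = (b : Matrix (Fin n) (Fin n) k) (Fin.castLE i.2 p) (Fin.castLE i.2 q)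
          + ((b : Matrix (Fin n) (Fin n) k) * single j i c)
            (Fin.castLE i.2 p) (Fin.castLE i.2 q) := by
      intro p q
      rw [hN, submatrix_apply, hbx0, Matrix.add_apply]
    have hNupper : N.BlockTriangular id := by
      intro p q hpq
      rw [hNentry]
      have hqi : (Fin.castLE i.2 q : Fin n) ≠ i := by
        intro h
        have h1 : q.1 < p.1 := hpq
        have hpi : p.1 ≤ i.1 := Nat.lt_succ_iff.mp p.2
        have h2 := congrArg Fin.val h
        simp only [Fin.coe_castLE] at h2
        omega
      rw [Matrix.mul_single_apply_of_ne (c := c) j i _ _ hqi, add_zero]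
      apply hb
      show (Fin.castLE i.2 q : Fin n) < Fin.castLE i.2 p
      rw [Fin.lt_def]
      exact hpq
    have hlast : N (Fin.last i.1) (Fin.last i.1) = 0 := by
      have hcast : (Fin.castLE i.2 (Fin.last i.1) : Fin n) = i := by ext; rfl
      rw [hNentry, hcast, Matrix.mul_single_apply_same (c := c) j i i]
      rw [hc, mul_div_assoc', mul_comm, mul_div_assoc, div_self hne, mul_one]
      ring
    rw [Matrix.det_of_upperTriangular hNupper]
    exact Finset.prod_eq_zero (Finset.mem_univ (Fin.last i.1)) hlast
  -- conclude: g = bm * b with b diagonal, hence g is lower triangular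
  rw [Set.mem_setOf_eq, hgbb, Units.val_mul, Matrix.transpose_mul]
  apply Matrix.BlockTriangular.mul
  · intro p q hpq
    exact hkey q p hpq
  · exact hbm
end

section
/- For any integer r ≥ 0 written as r = a·p^m + b with 0 ≤ b < p^m, the rational number r!/((p^m!)^a · a! · b!) is a p-adic unit (i.e., lies in Z_(p)^×). -/
open Nat

private lemma sum_digits_pow (p m : ℕ) (hp : 1 < p) :
    (p.digits (p ^ m)).sum = 1 := by
  have : p ^ m = p ^ m * 1 := (mul_one _).symm
  rw [this, Nat.digits_base_pow_mul hp one_pos]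
  simp [Nat.digits_def' hp, Nat.mod_eq_of_lt hp, Nat.div_eq_of_lt hp]

private lemma sum_digits_split (p m a b : ℕ) (hp : 1 < p) (hb : b < p ^ m) (ha : a ≠ 0) :
    (p.digits (a * p ^ m + b)).sum = (p.digits a).sum + (p.digits b).sum := by
  have hlen : (p.digits b).length ≤ m := by
    rcases eq_or_ne b 0 with rfl | hb0
    · simp
    · rw [Nat.digits_len p b hp hb0]
      have := Nat.log_lt_of_lt_pow hb0 hb
      omega
  have key := Nat.digits_append_zeroes_append_digits (b := p) (k := m - (p.digits b).length)
    (m := a) (n := b) hp (Nat.pos_of_ne_zero ha)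
  rw [Nat.add_sub_cancel' hlen] at key
  have : a * p ^ m + b = b + p ^ m * a := by ring
  rw [this, ← key]
  simp [List.sum_append, Nat.add_comm]

private lemma val_factorial_split (p : ℕ) [hp : Fact p.Prime] (m a b : ℕ) (hb : b < p ^ m) :
    padicValNat p (a * p ^ m + b).factorial =
      a * padicValNat p ((p ^ m).factorial) + padicValNat p a.factorial
        + padicValNat p b.factorial := by
  have hp1 : 1 < p := hp.out.one_lt
  rcases eq_or_ne a 0 with rfl | ha
  · simp
  have key : (p - 1) * padicValNat p (a * p ^ m + b).factorial =
      (p - 1) * (a * padicValNat p ((p ^ m).factorial) + padicValNat p a.factorial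
        + padicValNat p b.factorial) := by
    have h1 := sub_one_mul_padicValNat_factorial (p := p) (a * p ^ m + b)
    have h2 := sub_one_mul_padicValNat_factorial (p := p) (p ^ m)
    have h3 := sub_one_mul_padicValNat_factorial (p := p) a
    have h4 := sub_one_mul_padicValNat_factorial (p := p) b
    have hsplit := sum_digits_split p m a b hp1 hb ha
    have hpm := sum_digits_pow p m hp1
    have hsa : (p.digits a).sum ≤ a := Nat.digit_sum_le p a
    have hsb : (p.digits b).sum ≤ b := Nat.digit_sum_le p b
    have hpm1 : 1 ≤ p ^ m := Nat.one_le_pow _ _ (by omega)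
    rw [hsplit] at h1
    rw [hpm] at h2
    -- expand RHS
    rw [Nat.mul_add, Nat.mul_add, h3, h4, Nat.mul_comm (p-1) (a * _), Nat.mul_assoc,
      Nat.mul_comm _ (p-1), h2, h1]
    have hma : a * (p ^ m - 1) = a * p ^ m - a := by
      rw [Nat.mul_sub_one]
    have hle : a ≤ a * p ^ m := Nat.le_mul_of_pos_right a (by omega)
    omega
  have hp0 : p - 1 ≠ 0 := by omega
  exact Nat.eq_of_mul_eq_mul_left (by omega) key

/-- For any integer `r ≥ 0` written as `r = a·pᵐ + b` with `0 ≤ b < pᵐ`, the rational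
number `r!/((pᵐ!)ᵃ · a! · b!)` is a `p`-adic unit, i.e. its `p`-adic valuation is `0`. -/
theorem factorial_ratio_padic_unit (p : ℕ) (hp : p.Prime) (m a b r : ℕ)
    (hb : b < p ^ m) (hr : r = a * p ^ m + b) :
    padicValRat p ((r.factorial : ℚ) /
      (((p ^ m).factorial : ℚ) ^ a * (a.factorial : ℚ) * (b.factorial : ℚ))) = 0 := by
  haveI : Fact p.Prime := ⟨hp⟩
  have h1 : (r.factorial : ℚ) ≠ 0 := Nat.cast_ne_zero.mpr r.factorial_ne_zero
  have h2 : ((p ^ m).factorial : ℚ) ≠ 0 := Nat.cast_ne_zero.mpr (p ^ m).factorial_ne_zero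
  have h3 : (a.factorial : ℚ) ≠ 0 := Nat.cast_ne_zero.mpr a.factorial_ne_zero
  have h4 : (b.factorial : ℚ) ≠ 0 := Nat.cast_ne_zero.mpr b.factorial_ne_zero
  have h2a : ((p ^ m).factorial : ℚ) ^ a ≠ 0 := pow_ne_zero _ h2
  rw [padicValRat.div h1 (by positivity), padicValRat.mul (by positivity) h4,
    padicValRat.mul h2a h3, padicValRat.pow _]
  simp only [padicValRat.of_nat]
  rw [hr, val_factorial_split p m a b hb]
  push_cast
  ring
end
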